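/- Let p_1, …, p_n : [β,γ] → B(X) and q : [β,γ] → X be continuous. For each ζ ∈ [β,γ], let the principal solution 𝒳(·,ζ) : [α,γ] → B(X) be a function satisfying: 𝒳(t,ζ) = 0 for all t ∈ [α,ζ); 𝒳(ζ,ζ) = id_X; 𝒳(·,ζ) is continuous on [ζ,γ]; and 𝒳(·,ζ) is differentiable on [ζ,γ] with ∂_t 𝒳(t,ζ) = Σ_{i=1}^{n} p_i(t) ∘ 𝒳(τ_i(t),ζ) for all t ∈ [ζ,γ]. If x : [α,γ] → X is continuous with x(t) = φ(t) for t ∈ [α,β] and differentiable on [β,γ] with x′(t) = Σ_{i=1}^{n} p_i(t) x(τ_i(t)) + q(t) for all t ∈ [β,γ], then for all t ∈ [β,γ]: x(t) = 𝒳(t,β) φ(β) + ∫_β^t 𝒳(t,s) q(s) ds + ∫_β^t 𝒳(t,s) ( Σ_{i=1}^{n} χ_{[α,β)}(τ_i(s)) · p_i(s) φ(τ_i(s)) ) ds, where χ_{[α,β)}(r) = 1 if α ≤ r < β and χ_{[α,β)}(r) = 0 otherwise. -/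

import Mathlib

/-!
Let `v` be the forcing `q` together with the history terms `p i s (φ (τ i s))` for `τ i s < β`,
and `Y t = 𝒳(t, β) φ(β) + ∫_β^t 𝒳(t, s) v(s) ds`. Expanding `𝒳(t, s)` by its own integral
equation and exchanging the order of integration over the triangle `β ≤ s ≤ u ≤ t` shows that `Y`
solves the same integral equation `y t = φ β + ∫_β^t (∑ i, p i u (ŷ (τ i u)) + v u) du` as `x`,
where `ŷ` is `y` cut off below `β`. As the delays never look ahead, `x - Y` solves a homogeneous
Volterra equation controlled by its past, and iterating gives `‖x - Y‖ ≤ B (K (t - β))^k / k!`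
for every `k`.

The hypotheses say nothing about `s ↦ 𝒳(t, s)`, not even that it is measurable. Measurability and
a uniform bound come from realising `𝒳` as the pointwise limit of the Picard iterates of its
integral equation, which are jointly measurable by construction and converge by the same
factorial estimate.
-/

open Set MeasureTheory Filter Topology

theorem ContinuousOn.exists_continuous_eqOn_Icc {E : Type*} [TopologicalSpace E] {f : ℝ → E}
    {a b : ℝ} (hab : a ≤ b) (hf : ContinuousOn f (Icc a b)) :
    ∃ g : ℝ → E, Continuous g ∧ EqOn g f (Icc a b) :=
  ⟨IccExtend hab ((Icc a b).domRestrict f),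
    (continuousOn_iff_continuous_domRestrict.1 hf).Icc_extend',
    fun _ hx => IccExtend_of_mem hab _ hx⟩

theorem MeasureTheory.StronglyMeasurable.intervalIntegrable_of_norm_le {E : Type*}
    [NormedAddCommGroup E] {v : ℝ → E} (hv : StronglyMeasurable v) {a b C : ℝ}
    (hC : ∀ s ∈ Icc a b, ‖v s‖ ≤ C) {c d : ℝ} (hc : c ∈ Icc a b) (hd : d ∈ Icc a b) :
    IntervalIntegrable v volume c d :=
  ((IntegrableOn.of_bound measure_Icc_lt_top hv.aestronglyMeasurable C
    (ae_restrict_of_forall_mem measurableSet_Icc hC)).mono_set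
      (uIcc_subset_Icc hc hd)).intervalIntegrable

section Measurability

variable {α E F G : Type*} [MeasurableSpace α] [NormedAddCommGroup E] [NormedSpace ℝ E]
  [NormedAddCommGroup F] [NormedSpace ℝ F] [NormedAddCommGroup G] [NormedSpace ℝ G]

theorem MeasureTheory.StronglyMeasurable.clm_apply {f : α → E →L[ℝ] F} {g : α → E}
    (hf : StronglyMeasurable f) (hg : StronglyMeasurable g) :
    StronglyMeasurable fun a => f a (g a) :=
  isBoundedBilinearMap_apply.continuous.comp_stronglyMeasurable (hf.prodMk hg)

theorem MeasureTheory.StronglyMeasurable.clm_comp {f : α → F →L[ℝ] G} {g : α → E →L[ℝ] F}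
    (hf : StronglyMeasurable f) (hg : StronglyMeasurable g) :
    StronglyMeasurable fun a => (f a).comp (g a) :=
  isBoundedBilinearMap_comp.continuous.comp_stronglyMeasurable (hf.prodMk hg)

end Measurability

section Gronwall

variable {E : Type*} [NormedAddCommGroup E] [NormedSpace ℝ E] {a b K B : ℝ}

theorem integral_mul_pow_div_factorial (a r K B : ℝ) (k : ℕ) :
    ∫ u in a..r, K * (B * (K * (u - a)) ^ k / k.factorial) =
      B * (K * (r - a)) ^ (k + 1) / (k + 1).factorial := by
  have h : ∀ u, K * (B * (K * (u - a)) ^ k / k.factorial) =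
      (K ^ (k + 1) * B / k.factorial) * (u - a) ^ k := by
    intro u; rw [mul_pow]; ring
  simp_rw [h]
  rw [intervalIntegral.integral_const_mul, intervalIntegral.integral_comp_sub_right (· ^ k),
    integral_pow, Nat.factorial_succ]
  push_cast
  simp only [mul_pow]
  field_simp
  ring

theorem norm_le_pow_div_factorial_of_eq_integral (hK : 0 ≤ K) {e F : ℕ → ℝ → E}
    (h0 : ∀ r ∈ Icc a b, ‖e 0 r‖ ≤ B)
    (he : ∀ k, ∀ r ∈ Icc a b, e (k + 1) r = ∫ u in a..r, F k u)
    (hF : ∀ k, ∀ u ∈ Ioc a b, ∀ c, (∀ σ ∈ Icc a u, ‖e k σ‖ ≤ c) → ‖F k u‖ ≤ K * c) :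
    ∀ k, ∀ r ∈ Icc a b, ‖e k r‖ ≤ B * (K * (r - a)) ^ k / k.factorial := by
  intro k
  induction k with
  | zero => simpa using h0
  | succ k ih =>
    intro r hr
    have hB : 0 ≤ B := (norm_nonneg _).trans (h0 a ⟨le_rfl, hr.1.trans hr.2⟩)
    rw [he k r hr, ← integral_mul_pow_div_factorial]
    refine intervalIntegral.norm_integral_le_of_norm_le hr.1 (ae_of_all _ fun u hu => ?_)
      (by apply Continuous.intervalIntegrable; fun_prop)
    refine hF k u ⟨hu.1, hu.2.trans hr.2⟩ _ fun σ hσ =>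
      (ih σ ⟨hσ.1, hσ.2.trans (hu.2.trans hr.2)⟩).trans ?_
    have hσa : 0 ≤ K * (σ - a) := mul_nonneg hK (sub_nonneg.2 hσ.1)
    gcongr
    exact hσ.2

theorem tendsto_zero_of_eq_integral (hK : 0 ≤ K) {e F : ℕ → ℝ → E}
    (h0 : ∀ r ∈ Icc a b, ‖e 0 r‖ ≤ B)
    (he : ∀ k, ∀ r ∈ Icc a b, e (k + 1) r = ∫ u in a..r, F k u)
    (hF : ∀ k, ∀ u ∈ Ioc a b, ∀ c, (∀ σ ∈ Icc a u, ‖e k σ‖ ≤ c) → ‖F k u‖ ≤ K * c) {r : ℝ}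
    (hr : r ∈ Icc a b) : Tendsto (fun k => e k r) atTop (𝓝 0) := by
  refine squeeze_zero_norm
    (fun k => norm_le_pow_div_factorial_of_eq_integral hK h0 he hF k r hr) ?_
  simpa [mul_div_assoc] using
    (FloorSemiring.tendsto_pow_div_factorial_atTop (K * (r - a))).const_mul B

theorem eqOn_zero_of_eq_integral (hK : 0 ≤ K) {e F : ℝ → E}
    (hFi : IntervalIntegrable F volume a b) (he : ∀ r ∈ Icc a b, e r = ∫ u in a..r, F u)
    (hF : ∀ u ∈ Ioc a b, ∀ c, (∀ σ ∈ Icc a u, ‖e σ‖ ≤ c) → ‖F u‖ ≤ K * c) :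
    EqOn e 0 (Icc a b) := by
  have hB : ∀ r ∈ Icc a b, ‖e r‖ ≤ ∫ u in a..b, ‖F u‖ := fun r hr => by
    rw [he r hr]
    exact (intervalIntegral.norm_integral_le_integral_norm hr.1).trans
      (intervalIntegral.integral_mono_interval le_rfl hr.1 hr.2
        (ae_of_all _ fun _ => norm_nonneg _) hFi.norm)
  exact fun _ hr => tendsto_nhds_unique tendsto_const_nhds <| tendsto_zero_of_eq_integral
    (e := fun _ => e) (F := fun _ => F) hK hB (fun _ => he) (fun _ => hF) hr

end Gronwall

section FTC

variable {E : Type*} [NormedAddCommGroup E] [NormedSpace ℝ E] [CompleteSpace E]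
  {f f' : ℝ → E} {a b C : ℝ}

/-- `f'` agrees on `(a, b)` with the strongly measurable `t ↦ derivWithin f (Ici t) t`. -/
theorem intervalIntegrable_of_hasDerivWithinAt_of_norm_le (hab : a ≤ b)
    (hf : ∀ t ∈ Icc a b, HasDerivWithinAt f (f' t) (Icc a b) t)
    (hC : ∀ t ∈ Icc a b, ‖f' t‖ ≤ C) : IntervalIntegrable f' volume a b := by
  have hderiv : EqOn (fun t => derivWithin f (Ici t) t) f' (Ioo a b) := fun t ht =>
    ((hf t (Ioo_subset_Icc_self ht)).mono_of_mem_nhdsWithin (mem_of_superset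
      (Icc_mem_nhdsGE ht.2) (Icc_subset_Icc_left ht.1.le))).derivWithin (uniqueDiffWithinAt_Ici t)
  rw [intervalIntegrable_iff_integrableOn_Ioo_of_le hab]
  refine (integrableOn_const (C := C) measure_Ioo_lt_top.ne).mono' ?_
    (ae_restrict_of_forall_mem measurableSet_Ioo fun t ht => hC t (Ioo_subset_Icc_self ht))
  exact (stronglyMeasurable_derivWithin_Ici (f := f)).aestronglyMeasurable.restrict.congr
    ((ae_restrict_mem measurableSet_Ioo).mono hderiv)

theorem eq_add_integral_of_hasDerivWithinAt_of_norm_le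
    (hf : ∀ t ∈ Icc a b, HasDerivWithinAt f (f' t) (Icc a b) t)
    (hC : ∀ t ∈ Icc a b, ‖f' t‖ ≤ C) {r : ℝ} (hr : r ∈ Icc a b) :
    f r = f a + ∫ u in a..r, f' u := by
  have hsub : Icc a r ⊆ Icc a b := Icc_subset_Icc_right hr.2
  rw [intervalIntegral.integral_eq_sub_of_hasDeriv_right_of_le hr.1
    (fun t ht => (hf t (hsub ht)).continuousWithinAt.mono hsub)
    (fun t ht => ((hf t (hsub (Ioo_subset_Icc_self ht))).hasDerivAt
      (Icc_mem_nhds ht.1 (ht.2.trans_le hr.2))).hasDerivWithinAt)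
    (intervalIntegrable_of_hasDerivWithinAt_of_norm_le hr.1
      (fun t ht => (hf t (hsub ht)).mono hsub) fun t ht => hC t (hsub ht))]
  abel

end FTC

section Triangle

variable {E : Type*} [NormedAddCommGroup E] {f : ℝ → ℝ → E} {a b : ℝ}

theorem integrable_triangle_of_integrableOn
    (hf : IntegrableOn (Function.uncurry f) (Icc a b ×ˢ Icc a b)) :
    Integrable (Function.uncurry fun u s => if s < u then f u s else 0)
      ((volume.restrict (Ioc a b)).prod (volume.restrict (Ioc a b))) := by
  have h : (Function.uncurry fun u s => if s < u then f u s else 0) =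
      {z : ℝ × ℝ | z.2 < z.1}.indicator (Function.uncurry f) := by
    ext ⟨u, s⟩; simp [indicator_apply]
  rw [h, Measure.prod_restrict, ← Measure.volume_eq_prod]
  exact (hf.mono_set (prod_mono Ioc_subset_Icc_self Ioc_subset_Icc_self)).indicator
    (measurableSet_lt measurable_snd measurable_fst)

variable [NormedSpace ℝ E]

theorem setIntegral_Ioc_ite_lt_left {s : ℝ} (hs : s ∈ Icc a b) :
    ∫ u in Ioc a b, (if s < u then f u s else 0) = ∫ u in s..b, f u s := by
  have h : (fun u => if s < u then f u s else 0) = (Ioi s).indicator (f · s) := by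
    ext u; simp [indicator_apply]
  rw [h, integral_indicator measurableSet_Ioi, Measure.restrict_restrict measurableSet_Ioi,
    inter_comm, Ioc_inter_Ioi, sup_eq_right.2 hs.1, intervalIntegral.integral_of_le hs.2]

theorem setIntegral_Ioc_ite_lt_right {u : ℝ} (hu : u ∈ Ioc a b) :
    ∫ s in Ioc a b, (if s < u then f u s else 0) = ∫ s in a..u, f u s := by
  have h : (fun s => if s < u then f u s else 0) = (Iio u).indicator (f u) := by
    ext s; simp [indicator_apply]
  have hIoo : Iio u ∩ Ioc a b = Ioo a u := by
    ext s; simp only [mem_inter_iff, mem_Iio, mem_Ioc, mem_Ioo]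
    constructor
    · exact fun h => ⟨h.2.1, h.1⟩
    · exact fun h => ⟨h.2, h.1, h.2.le.trans hu.2⟩
  rw [h, integral_indicator measurableSet_Iio, Measure.restrict_restrict measurableSet_Iio, hIoo,
    intervalIntegral.integral_of_le hu.1.le, integral_Ioc_eq_integral_Ioo]

theorem integral_integral_swap_triangle (hab : a ≤ b)
    (hf : IntegrableOn (Function.uncurry f) (Icc a b ×ˢ Icc a b)) :
    ∫ s in a..b, (∫ u in s..b, f u s) = ∫ u in a..b, ∫ s in a..u, f u s := by
  rw [intervalIntegral.integral_of_le hab, intervalIntegral.integral_of_le hab,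
    ← setIntegral_congr_fun measurableSet_Ioc fun s hs =>
      setIntegral_Ioc_ite_lt_left (Ioc_subset_Icc_self hs),
    ← setIntegral_congr_fun measurableSet_Ioc fun u hu => setIntegral_Ioc_ite_lt_right hu]
  exact (integral_integral_swap (integrable_triangle_of_integrableOn hf)).symm

theorem intervalIntegrable_integral_triangle (hab : a ≤ b)
    (hf : IntegrableOn (Function.uncurry f) (Icc a b ×ˢ Icc a b)) :
    IntervalIntegrable (fun u => ∫ s in a..u, f u s) volume a b := by
  rw [intervalIntegrable_iff_integrableOn_Ioc_of_le hab]
  exact IntegrableOn.congr_fun (integrable_triangle_of_integrableOn hf).integral_prod_left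
    (fun u hu => setIntegral_Ioc_ite_lt_right hu) measurableSet_Ioc

end Triangle

section DelayOperators

variable {X : Type*} [NormedAddCommGroup X] [NormedSpace ℝ X] {ι : Type*} [Fintype ι]
  (p : ι → ℝ → X →L[ℝ] X) (τ : ι → ℝ → ℝ)

def delaySum (Φ : ℝ → ℝ → X →L[ℝ] X) (u s : ℝ) : X →L[ℝ] X :=
  ∑ i, (p i u).comp (Φ (τ i u) s)

def delayTerm (y : ℝ → X) (u : ℝ) : X :=
  ∑ i, p i u (y (τ i u))

/-- The Picard operator of the integral equation `Φ r s = id + ∫ u in s..r, delaySum p τ Φ u s`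
(for `s ≤ r`) of the principal solution. -/
noncomputable def delayPicard (Φ : ℝ → ℝ → X →L[ℝ] X) (r s : ℝ) : X →L[ℝ] X :=
  if s ≤ r then ContinuousLinearMap.id ℝ X + ∫ u in Ioc s r, delaySum p τ Φ u s else 0

variable {p τ}

theorem delaySum_sub (Φ Ψ : ℝ → ℝ → X →L[ℝ] X) (u s : ℝ) :
    delaySum p τ Φ u s - delaySum p τ Ψ u s = delaySum p τ (Φ - Ψ) u s := by
  simp only [delaySum, ← Finset.sum_sub_distrib, Pi.sub_apply, ContinuousLinearMap.comp_sub]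

theorem delayTerm_sub (y z : ℝ → X) (u : ℝ) :
    delayTerm p τ y u - delayTerm p τ z u = delayTerm p τ (y - z) u := by
  simp only [delayTerm, ← Finset.sum_sub_distrib, Pi.sub_apply, map_sub]

theorem norm_delaySum_le {Φ : ℝ → ℝ → X →L[ℝ] X} {u s K c : ℝ} (hK : ∑ i, ‖p i u‖ ≤ K)
    (hc0 : 0 ≤ c) (hc : ∀ i, ‖Φ (τ i u) s‖ ≤ c) : ‖delaySum p τ Φ u s‖ ≤ K * c :=
  calc ‖delaySum p τ Φ u s‖ ≤ ∑ i, ‖p i u‖ * c :=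
        norm_sum_le_of_le _ fun i _ => (ContinuousLinearMap.opNorm_comp_le _ _).trans
          (mul_le_mul_of_nonneg_left (hc i) (norm_nonneg _))
    _ ≤ K * c := by rw [← Finset.sum_mul]; exact mul_le_mul_of_nonneg_right hK hc0

theorem norm_delayTerm_le {y : ℝ → X} {u K c : ℝ} (hK : ∑ i, ‖p i u‖ ≤ K)
    (hc0 : 0 ≤ c) (hc : ∀ i, ‖y (τ i u)‖ ≤ c) : ‖delayTerm p τ y u‖ ≤ K * c :=
  calc ‖delayTerm p τ y u‖ ≤ ∑ i, ‖p i u‖ * c :=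
        norm_sum_le_of_le _ fun i _ => ((p i u).le_opNorm _).trans
          (mul_le_mul_of_nonneg_left (hc i) (norm_nonneg _))
    _ ≤ K * c := by rw [← Finset.sum_mul]; exact mul_le_mul_of_nonneg_right hK hc0

theorem stronglyMeasurable_delaySum (hp : ∀ i, StronglyMeasurable (p i))
    (hτ : ∀ i, Measurable (τ i)) {Φ : ℝ → ℝ → X →L[ℝ] X}
    (hΦ : StronglyMeasurable (Function.uncurry Φ)) :
    StronglyMeasurable (Function.uncurry (delaySum p τ Φ)) :=
  Finset.stronglyMeasurable_fun_sum _ fun i _ => ((hp i).comp_measurable measurable_fst).clm_comp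
    (hΦ.comp_measurable (((hτ i).comp measurable_fst).prodMk measurable_snd))

theorem stronglyMeasurable_delayPicard (hp : ∀ i, StronglyMeasurable (p i))
    (hτ : ∀ i, Measurable (τ i)) {Φ : ℝ → ℝ → X →L[ℝ] X}
    (hΦ : StronglyMeasurable (Function.uncurry Φ)) :
    StronglyMeasurable (Function.uncurry (delayPicard p τ Φ)) := by
  have hset : MeasurableSet {z : (ℝ × ℝ) × ℝ | z.2 ∈ Ioc z.1.2 z.1.1} :=
    (measurableSet_lt (measurable_snd.comp measurable_fst) measurable_snd).inter
      (measurableSet_le measurable_snd (measurable_fst.comp measurable_fst))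
  have hint : StronglyMeasurable fun z : ℝ × ℝ => ∫ u in Ioc z.2 z.1, delaySum p τ Φ u z.2 := by
    simp_rw [← integral_indicator measurableSet_Ioc]
    refine StronglyMeasurable.integral_prod_right' (f := fun z : (ℝ × ℝ) × ℝ =>
      (Ioc z.1.2 z.1.1).indicator (fun u => delaySum p τ Φ u z.1.2) z.2) ?_
    simp only [indicator_apply]
    exact StronglyMeasurable.ite hset ((stronglyMeasurable_delaySum hp hτ hΦ).comp_measurable
      (measurable_snd.prodMk (measurable_snd.comp measurable_fst))) stronglyMeasurable_const
  exact StronglyMeasurable.ite (measurableSet_le measurable_snd measurable_fst)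
    (stronglyMeasurable_const.add hint) stronglyMeasurable_const

theorem stronglyMeasurable_iterate_delayPicard (hp : ∀ i, StronglyMeasurable (p i))
    (hτ : ∀ i, Measurable (τ i)) (k : ℕ) :
    StronglyMeasurable (Function.uncurry ((delayPicard p τ)^[k] 0)) := by
  induction k with
  | zero => exact stronglyMeasurable_const
  | succ k ih =>
    rw [Function.iterate_succ_apply']
    exact stronglyMeasurable_delayPicard hp hτ ih

theorem iterate_delayPicard_of_lt {r s : ℝ} (h : r < s) (k : ℕ) :
    (delayPicard p τ)^[k] 0 r s = 0 := by
  cases k with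
  | zero => rfl
  | succ k => rw [Function.iterate_succ_apply']; simp [delayPicard, not_le.2 h]

theorem norm_iterate_delayPicard_le {s b K : ℝ} (hK0 : 0 ≤ K)
    (hK : ∀ u ∈ Ioc s b, ∑ i, ‖p i u‖ ≤ K) (hτ : ∀ i, ∀ u ∈ Ioc s b, τ i u ≤ u) (k : ℕ) :
    ∀ r ∈ Icc s b, ‖(delayPicard p τ)^[k] 0 r s‖ ≤ Real.exp (K * (r - s)) := by
  induction k with
  | zero => intro r _; simpa using (Real.exp_pos _).le
  | succ k ih =>
    intro r hr
    have hexp : ∫ u in s..r, K * Real.exp (K * (u - s)) = Real.exp (K * (r - s)) - 1 := by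
      rw [intervalIntegral.integral_eq_sub_of_hasDerivAt (f := fun u => Real.exp (K * (u - s)))
        (fun u _ => by simpa [mul_comm] using ((hasDerivAt_id u).sub_const s).const_mul K |>.exp)
        (by apply Continuous.intervalIntegrable; fun_prop)]
      simp
    have hbound : ∀ u ∈ Ioc s r, ‖delaySum p τ ((delayPicard p τ)^[k] 0) u s‖ ≤
        K * Real.exp (K * (u - s)) := by
      intro u hu
      have hub : u ∈ Ioc s b := ⟨hu.1, hu.2.trans hr.2⟩
      refine norm_delaySum_le (hK u hub) (Real.exp_pos _).le fun i => ?_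
      rcases lt_or_ge (τ i u) s with hlt | hge
      · simpa [iterate_delayPicard_of_lt hlt] using (Real.exp_pos _).le
      · exact (ih _ ⟨hge, (hτ i u hub).trans hub.2⟩).trans (Real.exp_le_exp.2
          (mul_le_mul_of_nonneg_left (by linarith [hτ i u hub]) hK0))
    rw [Function.iterate_succ_apply', delayPicard, if_pos hr.1,
      ← intervalIntegral.integral_of_le hr.1]
    calc _ ≤ ‖ContinuousLinearMap.id ℝ X‖ +
          ‖∫ u in s..r, delaySum p τ ((delayPicard p τ)^[k] 0) u s‖ := norm_add_le _ _
      _ ≤ 1 + ∫ u in s..r, K * Real.exp (K * (u - s)) := by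
          gcongr
          · exact ContinuousLinearMap.norm_id_le
          · exact intervalIntegral.norm_integral_le_of_norm_le hr.1 (ae_of_all _ hbound)
              (by apply Continuous.intervalIntegrable; fun_prop)
      _ = Real.exp (K * (r - s)) := by rw [hexp]; ring

theorem intervalIntegrable_delaySum_iterate_delayPicard (hp : ∀ i, StronglyMeasurable (p i))
    (hτm : ∀ i, Measurable (τ i)) {s b K : ℝ} (hsb : s ≤ b) (hK0 : 0 ≤ K)
    (hK : ∀ u ∈ Ioc s b, ∑ i, ‖p i u‖ ≤ K) (hτ : ∀ i, ∀ u ∈ Ioc s b, τ i u ≤ u) (k : ℕ) :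
    IntervalIntegrable (fun u => delaySum p τ ((delayPicard p τ)^[k] 0) u s) volume s b := by
  rw [intervalIntegrable_iff_integrableOn_Ioc_of_le hsb]
  refine IntegrableOn.of_bound measure_Ioc_lt_top ((stronglyMeasurable_delaySum hp hτm
    (stronglyMeasurable_iterate_delayPicard hp hτm k)).comp_measurable
      (measurable_id.prodMk measurable_const)).aestronglyMeasurable (K * Real.exp (K * (b - s)))
    (ae_restrict_of_forall_mem measurableSet_Ioc fun u hu => ?_)
  refine norm_delaySum_le (hK u hu) (Real.exp_pos _).le fun i => ?_
  rcases lt_or_ge (τ i u) s with hlt | hge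
  · simp [iterate_delayPicard_of_lt hlt, (Real.exp_pos _).le]
  · exact (norm_iterate_delayPicard_le hK0 hK hτ k _ ⟨hge, (hτ i u hu).trans hu.2⟩).trans
      (Real.exp_le_exp.2 (mul_le_mul_of_nonneg_left (by linarith [hτ i u hu, hu.2]) hK0))

end DelayOperators

section PrincipalSolution

variable {X : Type*} [NormedAddCommGroup X] [NormedSpace ℝ X] {ι : Type*}
  {p : ι → ℝ → X →L[ℝ] X} {τ : ι → ℝ → ℝ} {α β γ : ℝ} {XX : ℝ → ℝ → X →L[ℝ] X}

variable (p τ α β γ) in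
/-- Standing assumptions on `y' t = ∑ i, p i t (y (τ i t))` for `t ∈ [β, γ]`, with history on
`[α, β]`. Coefficients and delays are taken continuous on all of `ℝ` so that compositions with
them are measurable; only their values on `[β, γ]` matter. -/
structure IsLinearDelaySystem : Prop where
  le_initial : α ≤ β
  continuous_coeff : ∀ i, Continuous (p i)
  continuous_delay : ∀ i, Continuous (τ i)
  delay_mem : ∀ i, ∀ t ∈ Icc β γ, τ i t ∈ Icc α t

namespace IsLinearDelaySystem

variable (hD : IsLinearDelaySystem p τ α β γ)
include hD

theorem delay_mem_Icc {i : ι} {t : ℝ} (ht : t ∈ Icc β γ) : τ i t ∈ Icc α γ :=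
  ⟨(hD.delay_mem i t ht).1, (hD.delay_mem i t ht).2.trans ht.2⟩

variable [Fintype ι]

theorem exists_sum_norm_le : ∃ K, 0 ≤ K ∧ ∀ u ∈ Icc β γ, ∑ i, ‖p i u‖ ≤ K := by
  obtain ⟨K, hK⟩ := isCompact_Icc.exists_bound_of_continuousOn (f := fun u => ∑ i, ‖p i u‖)
    (continuous_finsetSum _ fun i _ => (hD.continuous_coeff i).norm).continuousOn
  exact ⟨max K 0, le_max_right _ _, fun u hu =>
    (Real.le_norm_self _).trans ((hK u hu).trans (le_max_left _ _))⟩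

theorem exists_norm_delayTerm_add_le {q x : ℝ → X} (hq : ContinuousOn q (Icc β γ))
    (hx : ContinuousOn x (Icc α γ)) : ∃ C, ∀ u ∈ Icc β γ, ‖delayTerm p τ x u + q u‖ ≤ C :=
  isCompact_Icc.exists_bound_of_continuousOn <| (continuousOn_finsetSum _ fun i _ =>
    (hD.continuous_coeff i).continuousOn.clm_apply (hx.comp (hD.continuous_delay i).continuousOn
      fun _ hu => hD.delay_mem_Icc hu)).add hq

theorem exists_norm_delayTerm_indicator_le {φ : ℝ → X} (hφ : ContinuousOn φ (Icc α β)) :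
    ∃ C, ∀ s ∈ Icc β γ, ‖delayTerm p τ ((Ico α β).indicator φ) s‖ ≤ C := by
  obtain ⟨K, -, hK⟩ := hD.exists_sum_norm_le
  obtain ⟨Cφ, hCφ⟩ := isCompact_Icc.exists_bound_of_continuousOn hφ
  refine ⟨K * max Cφ 0, fun s hs => norm_delayTerm_le (hK s hs) (le_max_right _ _) fun i => ?_⟩
  by_cases hi : τ i s ∈ Ico α β
  · rw [indicator_of_mem hi]; exact (hCφ _ (Ico_subset_Icc_self hi)).trans (le_max_left _ _)
  · rw [indicator_of_notMem hi, norm_zero]; exact le_max_right _ _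

theorem delayTerm_eq_add {φ x : ℝ → X} (hxφ : ∀ t ∈ Icc α β, x t = φ t) {u : ℝ}
    (hu : u ∈ Icc β γ) :
    delayTerm p τ x u =
      delayTerm p τ ((Ici β).indicator x) u + delayTerm p τ ((Ico α β).indicator φ) u := by
  simp only [delayTerm, ← Finset.sum_add_distrib, ← map_add]
  refine Finset.sum_congr rfl fun i _ => congrArg _ ?_
  have hτ := hD.delay_mem i u hu
  by_cases hβτ : β ≤ τ i u
  · rw [indicator_of_mem (mem_Ici.2 hβτ),
      indicator_of_notMem (fun h => not_le.2 h.2 hβτ : τ i u ∉ Ico α β), add_zero]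
  · rw [indicator_of_notMem (notMem_Ici.2 (not_le.1 hβτ)),
      indicator_of_mem (mem_Ico.2 ⟨hτ.1, not_le.1 hβτ⟩), zero_add,
      hxφ _ ⟨hτ.1, (not_le.1 hβτ).le⟩]

end IsLinearDelaySystem

variable [Fintype ι]

variable (p τ α β γ XX) in
structure IsPrincipalSolution : Prop where
  eq_zero : ∀ ζ ∈ Icc β γ, ∀ t ∈ Ico α ζ, XX t ζ = 0
  apply_self : ∀ ζ ∈ Icc β γ, XX ζ ζ = ContinuousLinearMap.id ℝ X
  hasDerivWithinAt : ∀ ζ ∈ Icc β γ, ∀ t ∈ Icc ζ γ,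
    HasDerivWithinAt (fun t => XX t ζ) (delaySum p τ XX t ζ) (Icc ζ γ) t

namespace IsPrincipalSolution

variable (hX : IsPrincipalSolution p τ α β γ XX) (hD : IsLinearDelaySystem p τ α β γ)
include hX

theorem exists_bound {s : ℝ} (hs : s ∈ Icc β γ) :
    ∃ C, 0 ≤ C ∧ ∀ r ∈ Icc α γ, ‖XX r s‖ ≤ C := by
  obtain ⟨C, hC⟩ := isCompact_Icc.exists_bound_of_continuousOn
    fun t ht => (hX.hasDerivWithinAt s hs t ht).continuousWithinAt
  refine ⟨max C 0, le_max_right _ _, fun r hr => ?_⟩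
  rcases lt_or_ge r s with hrs | hsr
  · simp [hX.eq_zero s hs r ⟨hr.1, hrs⟩]
  · exact (hC r ⟨hsr, hr.2⟩).trans (le_max_left _ _)

include hD

theorem exists_bound_delaySum {s : ℝ} (hs : s ∈ Icc β γ) :
    ∃ C, ∀ u ∈ Icc s γ, ‖delaySum p τ XX u s‖ ≤ C := by
  obtain ⟨K, -, hK⟩ := hD.exists_sum_norm_le
  obtain ⟨C, hC0, hC⟩ := hX.exists_bound hs
  refine ⟨K * C, fun u hu => ?_⟩
  have hu' : u ∈ Icc β γ := ⟨hs.1.trans hu.1, hu.2⟩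
  exact norm_delaySum_le (hK u hu') hC0 fun i => hC _ (hD.delay_mem_Icc hu')

variable [CompleteSpace X]

theorem intervalIntegrable_delaySum {s r : ℝ} (hs : s ∈ Icc β γ) (hr : r ∈ Icc s γ) :
    IntervalIntegrable (fun u => delaySum p τ XX u s) volume s r :=
  have ⟨_, hC⟩ := hX.exists_bound_delaySum hD hs
  (intervalIntegrable_of_hasDerivWithinAt_of_norm_le hs.2 (hX.hasDerivWithinAt s hs) hC).mono_set
    (uIcc_subset_uIcc left_mem_uIcc (mem_uIcc_of_le hr.1 hr.2))

theorem eq_id_add_integral {s r : ℝ} (hs : s ∈ Icc β γ) (hr : r ∈ Icc s γ) :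
    XX r s = ContinuousLinearMap.id ℝ X + ∫ u in s..r, delaySum p τ XX u s := by
  have ⟨_, hC⟩ := hX.exists_bound_delaySum hD hs
  rw [eq_add_integral_of_hasDerivWithinAt_of_norm_le (hX.hasDerivWithinAt s hs) hC hr,
    hX.apply_self s hs]

theorem intervalIntegrable_delaySum_apply {r : ℝ} (hr : r ∈ Icc β γ) (w : X) :
    IntervalIntegrable (fun u => delaySum p τ XX u β w) volume β r :=
  have hA := hX.intervalIntegrable_delaySum hD ⟨le_rfl, hr.1.trans hr.2⟩ hr
  ⟨hA.1.apply_continuousLinearMap w, hA.2.apply_continuousLinearMap w⟩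

theorem apply_eq_add_integral {s r : ℝ} (hs : s ∈ Icc β γ) (hr : r ∈ Icc s γ) (w : X) :
    XX r s w = w + ∫ u in s..r, delaySum p τ XX u s w := by
  rw [hX.eq_id_add_integral hD hs hr, add_apply, ContinuousLinearMap.id_apply,
    ContinuousLinearMap.intervalIntegral_apply (hX.intervalIntegrable_delaySum hD hs hr)]

theorem tendsto_iterate_delayPicard {r s : ℝ} (hr : r ∈ Icc α γ) (hs : s ∈ Icc β γ) :
    Tendsto (fun k => (delayPicard p τ)^[k] 0 r s) atTop (𝓝 (XX r s)) := by
  rcases lt_or_ge r s with hrs | hsr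
  · simp [iterate_delayPicard_of_lt hrs, hX.eq_zero s hs r ⟨hr.1, hrs⟩]
  obtain ⟨K, hK0, hK⟩ := hD.exists_sum_norm_le
  obtain ⟨C, -, hC⟩ := hX.exists_bound hs
  have hIoc : ∀ u ∈ Ioc s γ, u ∈ Icc β γ := fun u hu => ⟨hs.1.trans hu.1.le, hu.2⟩
  rw [← tendsto_sub_nhds_zero_iff]
  refine tendsto_zero_of_eq_integral (e := fun k r => (delayPicard p τ)^[k] 0 r s - XX r s)
    (F := fun k u => delaySum p τ ((delayPicard p τ)^[k] 0 - XX) u s) hK0 (B := C)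
    (fun r hr => ?_) (fun k r hr => ?_) (fun k u hu c hc => ?_) ⟨hsr, hr.2⟩
  · simpa using hC r ⟨hD.le_initial.trans (hs.1.trans hr.1), hr.2⟩
  · have hint := intervalIntegrable_delaySum_iterate_delayPicard
      (fun i => (hD.continuous_coeff i).stronglyMeasurable)
      (fun i => (hD.continuous_delay i).measurable) hr.1 hK0
      (fun u hu => hK u (hIoc u ⟨hu.1, hu.2.trans hr.2⟩))
      (fun i u hu => (hD.delay_mem i u (hIoc u ⟨hu.1, hu.2.trans hr.2⟩)).2) k
    rw [Function.iterate_succ_apply', delayPicard, if_pos hr.1, hX.eq_id_add_integral hD hs hr,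
      ← intervalIntegral.integral_of_le hr.1, add_sub_add_left_eq_sub,
      ← intervalIntegral.integral_sub hint (hX.intervalIntegrable_delaySum hD hs hr)]
    simp only [delaySum_sub]
  · refine norm_delaySum_le (hK u (hIoc u hu)) ((norm_nonneg _).trans (hc u ⟨hu.1.le, le_rfl⟩))
      fun i => ?_
    rcases lt_or_ge (τ i u) s with hlt | hge
    · simpa [iterate_delayPicard_of_lt hlt,
        hX.eq_zero s hs _ ⟨(hD.delay_mem i u (hIoc u hu)).1, hlt⟩]
        using (norm_nonneg _).trans (hc u ⟨hu.1.le, le_rfl⟩)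
    · exact hc _ ⟨hge, (hD.delay_mem i u (hIoc u hu)).2⟩

theorem stronglyMeasurable_indicator :
    StronglyMeasurable ((Icc α γ ×ˢ Icc β γ).indicator (Function.uncurry XX)) := by
  have hS : MeasurableSet (Icc α γ ×ˢ Icc β γ) := measurableSet_Icc.prod measurableSet_Icc
  refine stronglyMeasurable_of_tendsto atTop (fun k =>
    (stronglyMeasurable_iterate_delayPicard (fun i => (hD.continuous_coeff i).stronglyMeasurable)
      (fun i => (hD.continuous_delay i).measurable) k).indicator hS)
    (tendsto_pi_nhds.2 fun z => ?_)
  by_cases hz : z ∈ Icc α γ ×ˢ Icc β γ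
  · simp only [indicator_of_mem hz]
    exact hX.tendsto_iterate_delayPicard hD hz.1 hz.2
  · simp only [indicator_of_notMem hz, tendsto_const_nhds]

theorem exists_norm_le : ∃ M, 0 ≤ M ∧ ∀ r ∈ Icc α γ, ∀ s ∈ Icc β γ, ‖XX r s‖ ≤ M := by
  obtain ⟨K, hK0, hK⟩ := hD.exists_sum_norm_le
  refine ⟨Real.exp (K * (γ - β)), (Real.exp_pos _).le, fun r hr s hs => ?_⟩
  rcases lt_or_ge r s with hrs | hsr
  · simp [hX.eq_zero s hs r ⟨hr.1, hrs⟩, (Real.exp_pos _).le]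
  have hIoc : ∀ u ∈ Ioc s γ, u ∈ Icc β γ := fun u hu => ⟨hs.1.trans hu.1.le, hu.2⟩
  refine le_of_tendsto' (hX.tendsto_iterate_delayPicard hD hr hs).norm fun k =>
    (norm_iterate_delayPicard_le hK0 (fun u hu => hK u (hIoc u hu))
      (fun i u hu => (hD.delay_mem i u (hIoc u hu)).2) k r ⟨hsr, hr.2⟩).trans
      (Real.exp_le_exp.2 (mul_le_mul_of_nonneg_left (by linarith [hr.2, hs.1]) hK0))

end IsPrincipalSolution

end PrincipalSolution

section VariationOfParameters

variable {X : Type*} [NormedAddCommGroup X] [NormedSpace ℝ X] [CompleteSpace X] {ι : Type*}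
  [Fintype ι] {p : ι → ℝ → X →L[ℝ] X} {τ : ι → ℝ → ℝ} {α β γ Cv : ℝ}
  {XX : ℝ → ℝ → X →L[ℝ] X} {v : ℝ → X}

noncomputable def variationOfParameters (XX : ℝ → ℝ → X →L[ℝ] X) (β : ℝ) (w : X) (v : ℝ → X)
    (t : ℝ) : X :=
  XX t β w + ∫ s in β..t, XX t s (v s)

namespace IsPrincipalSolution

variable (hX : IsPrincipalSolution p τ α β γ XX) (hD : IsLinearDelaySystem p τ α β γ)
  (hv : StronglyMeasurable v) (hCv : ∀ s ∈ Icc β γ, ‖v s‖ ≤ Cv)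
include hX hD hv hCv

theorem integrableOn_apply {σ : ℝ} (hσ : σ ∈ Icc α γ) :
    IntegrableOn (fun s => XX σ s (v s)) (Icc β γ) := by
  obtain ⟨M, hM0, hM⟩ := hX.exists_norm_le hD
  refine IntegrableOn.of_bound measure_Icc_lt_top ?_ (M * Cv)
    (ae_restrict_of_forall_mem measurableSet_Icc fun s hs => ?_)
  · refine (((hX.stronglyMeasurable_indicator hD).comp_measurable
      (measurable_const.prodMk measurable_id : Measurable fun s : ℝ => (σ, s))).clm_apply
      hv).aestronglyMeasurable.restrict.congr
      (ae_restrict_of_forall_mem measurableSet_Icc fun s hs => ?_)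
    simp only [Function.comp_apply, indicator_of_mem (mk_mem_prod hσ hs),
      Function.uncurry_apply_pair]
  · exact ((XX σ s).le_opNorm _).trans (mul_le_mul (hM σ hσ s hs) (hCv s hs) (norm_nonneg _) hM0)

theorem intervalIntegrable_apply {σ a b : ℝ} (hσ : σ ∈ Icc α γ) (ha : a ∈ Icc β γ)
    (hb : b ∈ Icc β γ) : IntervalIntegrable (fun s => XX σ s (v s)) volume a b :=
  ((hX.integrableOn_apply hD hv hCv hσ).mono_set (uIcc_subset_Icc ha hb)).intervalIntegrable

theorem integrableOn_delaySum_apply :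
    IntegrableOn (Function.uncurry fun u s => delaySum p τ XX u s (v s))
      (Icc β γ ×ˢ Icc β γ) := by
  obtain ⟨K, hK0, hK⟩ := hD.exists_sum_norm_le
  obtain ⟨M, hM0, hM⟩ := hX.exists_norm_le hD
  have hS : MeasurableSet (Icc β γ ×ˢ Icc β γ) := measurableSet_Icc.prod measurableSet_Icc
  set H : ℝ → ℝ → X →L[ℝ] X :=
    fun r s => (Icc α γ ×ˢ Icc β γ).indicator (Function.uncurry XX) (r, s)
  have hH : StronglyMeasurable (Function.uncurry H) := hX.stronglyMeasurable_indicator hD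
  refine IntegrableOn.of_bound (isCompact_Icc.prod isCompact_Icc).measure_lt_top ?_
    (K * M * Cv) (ae_restrict_of_forall_mem hS fun z hz => ?_)
  · refine ((stronglyMeasurable_delaySum (fun i => (hD.continuous_coeff i).stronglyMeasurable)
      (fun i => (hD.continuous_delay i).measurable) hH).clm_apply
      (hv.comp_measurable measurable_snd)).aestronglyMeasurable.restrict.congr
      (ae_restrict_of_forall_mem hS fun z hz => ?_)
    simp only [Function.uncurry, delaySum, H]
    congr 1
    refine Finset.sum_congr rfl fun i _ => ?_
    rw [indicator_of_mem (mk_mem_prod (hD.delay_mem_Icc hz.1) hz.2)]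
    rfl
  · exact ((delaySum p τ XX z.1 z.2).le_opNorm _).trans (mul_le_mul
      (norm_delaySum_le (hK z.1 hz.1) hM0 fun i => hM _ (hD.delay_mem_Icc hz.1) _ hz.2)
      (hCv z.2 hz.2) (norm_nonneg _) (mul_nonneg hK0 hM0))

theorem add_integral_eq_indicator (w : X) {σ u : ℝ} (hσ : σ ∈ Icc α γ) (hu : u ∈ Icc β γ)
    (hσu : σ ≤ u) :
    XX σ β w + ∫ s in β..u, XX σ s (v s) =
      (Ici β).indicator (variationOfParameters XX β w v) σ := by
  have hβ : β ∈ Icc β γ := ⟨le_rfl, hu.1.trans hu.2⟩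
  have hzero : ∀ a ∈ Icc β u, σ ≤ a → ∫ s in a..u, XX σ s (v s) = 0 := fun a ha hσa =>
    intervalIntegral.integral_zero_ae <| ae_of_all _ fun s hs => by
      rw [uIoc_of_le ha.2] at hs
      rw [hX.eq_zero s ⟨ha.1.trans hs.1.le, hs.2.trans hu.2⟩ σ ⟨hσ.1, hσa.trans_lt hs.1⟩]
      rfl
  rcases lt_or_ge σ β with hσβ | hβσ
  · rw [indicator_of_notMem (notMem_Ici.2 hσβ), hX.eq_zero β hβ σ ⟨hσ.1, hσβ⟩,
      hzero β ⟨le_rfl, hu.1⟩ hσβ.le]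
    simp
  · have hσ' : σ ∈ Icc β γ := ⟨hβσ, hσ.2⟩
    rw [indicator_of_mem (mem_Ici.2 hβσ), variationOfParameters,
      ← intervalIntegral.integral_add_adjacent_intervals
        (hX.intervalIntegrable_apply hD hv hCv hσ hβ hσ')
        (hX.intervalIntegrable_apply hD hv hCv hσ hσ' hu),
      hzero σ ⟨hβσ, hσu⟩ le_rfl, add_zero]

theorem integral_apply_eq {r : ℝ} (hr : r ∈ Icc β γ) :
    ∫ s in β..r, XX r s (v s) =
      (∫ s in β..r, v s) + ∫ u in β..r, ∫ s in β..u, delaySum p τ XX u s (v s) := by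
  have hsub : Icc β r ⊆ Icc β γ := Icc_subset_Icc_right hr.2
  have hβ : β ∈ Icc β γ := ⟨le_rfl, hr.1.trans hr.2⟩
  rw [← integral_integral_swap_triangle hr.1
      ((hX.integrableOn_delaySum_apply hD hv hCv).mono_set (prod_mono hsub hsub)),
    ← sub_eq_iff_eq_add', ← intervalIntegral.integral_sub
      (hX.intervalIntegrable_apply hD hv hCv ⟨hD.le_initial.trans hr.1, hr.2⟩ hβ hr)
      (hv.intervalIntegrable_of_norm_le hCv hβ hr)]
  refine intervalIntegral.integral_congr fun s hs => ?_
  rw [uIcc_of_le hr.1] at hs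
  rw [hX.apply_eq_add_integral hD (hsub hs) ⟨hs.2, hr.2⟩, add_sub_cancel_left]

theorem delaySum_add_integral_eq_delayTerm (w : X) {u : ℝ} (hu : u ∈ Icc β γ) :
    delaySum p τ XX u β w + ∫ s in β..u, delaySum p τ XX u s (v s) =
      delayTerm p τ ((Ici β).indicator (variationOfParameters XX β w v)) u := by
  have hint : ∀ i, IntervalIntegrable (fun s => XX (τ i u) s (v s)) volume β u := fun i =>
    hX.intervalIntegrable_apply hD hv hCv (hD.delay_mem_Icc hu) ⟨le_rfl, hu.1.trans hu.2⟩ hu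
  simp only [delaySum, delayTerm, sum_apply, ContinuousLinearMap.comp_apply]
  rw [intervalIntegral.integral_finsetSum fun i _ =>
      ⟨(p i u).integrable_comp (hint i).1, (p i u).integrable_comp (hint i).2⟩,
    ← Finset.sum_add_distrib]
  refine Finset.sum_congr rfl fun i _ => ?_
  rw [(p i u).intervalIntegral_comp_comm (hint i), ← map_add,
    hX.add_integral_eq_indicator hD hv hCv w (hD.delay_mem_Icc hu) hu (hD.delay_mem i u hu).2]

theorem intervalIntegrable_integral_delaySum_apply {r : ℝ} (hr : r ∈ Icc β γ) :
    IntervalIntegrable (fun u => ∫ s in β..u, delaySum p τ XX u s (v s)) volume β r :=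
  have hsub : Icc β r ⊆ Icc β γ := Icc_subset_Icc_right hr.2
  intervalIntegrable_integral_triangle hr.1
    ((hX.integrableOn_delaySum_apply hD hv hCv).mono_set (prod_mono hsub hsub))

theorem intervalIntegrable_delayTerm_indicator (w : X) {r : ℝ} (hr : r ∈ Icc β γ) :
    IntervalIntegrable (delayTerm p τ ((Ici β).indicator (variationOfParameters XX β w v)))
      volume β r := by
  refine ((hX.intervalIntegrable_delaySum_apply hD hr w).add
    (hX.intervalIntegrable_integral_delaySum_apply hD hv hCv hr)).congr fun u hu => ?_
  rw [uIoc_of_le hr.1] at hu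
  exact hX.delaySum_add_integral_eq_delayTerm hD hv hCv w ⟨hu.1.le, hu.2.trans hr.2⟩

theorem variationOfParameters_eq (w : X) {r : ℝ} (hr : r ∈ Icc β γ) :
    variationOfParameters XX β w v r = w + ∫ u in β..r,
      (delayTerm p τ ((Ici β).indicator (variationOfParameters XX β w v)) u + v u) := by
  have hβ : β ∈ Icc β γ := ⟨le_rfl, hr.1.trans hr.2⟩
  have hA := hX.intervalIntegrable_delaySum_apply hD hr w
  have hB := hX.intervalIntegrable_integral_delaySum_apply hD hv hCv hr
  rw [← intervalIntegral.integral_congr fun u hu => congrArg (· + v u)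
      (hX.delaySum_add_integral_eq_delayTerm hD hv hCv w (uIcc_subset_Icc hβ hr hu)),
    intervalIntegral.integral_add (hA.add hB) (hv.intervalIntegrable_of_norm_le hCv hβ hr),
    intervalIntegral.integral_add hA hB, variationOfParameters,
    hX.apply_eq_add_integral hD hβ hr, hX.integral_apply_eq hD hv hCv hr]
  abel

theorem eqOn_variationOfParameters {x : ℝ → X} {w : X}
    (hx : ∀ r ∈ Icc β γ, x r = w + ∫ u in β..r, (delayTerm p τ ((Ici β).indicator x) u + v u))
    (hxi : IntervalIntegrable (delayTerm p τ ((Ici β).indicator x)) volume β γ) :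
    EqOn x (variationOfParameters XX β w v) (Icc β γ) := by
  intro t ht
  have hγ : γ ∈ Icc β γ := ⟨ht.1.trans ht.2, le_rfl⟩
  obtain ⟨K, hK0, hK⟩ := hD.exists_sum_norm_le
  have hvI := hv.intervalIntegrable_of_norm_le hCv ⟨le_rfl, hγ.1⟩ hγ
  have hYeq := fun r (hr : r ∈ Icc β γ) => hX.variationOfParameters_eq hD hv hCv w hr
  have hYi := hX.intervalIntegrable_delayTerm_indicator hD hv hCv w hγ
  set Y := variationOfParameters XX β w v
  have hsplit : delayTerm p τ ((Ici β).indicator (x - Y)) =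
      delayTerm p τ ((Ici β).indicator x) - delayTerm p τ ((Ici β).indicator Y) := by
    ext u; rw [indicator_sub', Pi.sub_apply, delayTerm_sub]
  refine sub_eq_zero.1 (eqOn_zero_of_eq_integral hK0 (e := x - Y)
    (F := delayTerm p τ ((Ici β).indicator (x - Y))) (hsplit ▸ hxi.sub hYi)
    (fun r hr => ?_) (fun u hu c hc => ?_) ht)
  · have hsub : uIcc β r ⊆ uIcc β γ := uIcc_subset_uIcc left_mem_uIcc (mem_uIcc_of_le hr.1 hr.2)
    rw [Pi.sub_apply, hx r hr, hYeq r hr, add_sub_add_left_eq_sub,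
      ← intervalIntegral.integral_sub ((hxi.add hvI).mono_set hsub) ((hYi.add hvI).mono_set hsub),
      hsplit]
    simp only [Pi.sub_apply, add_sub_add_right_eq_sub]
  · have hc0 : 0 ≤ c := (norm_nonneg _).trans (hc u ⟨hu.1.le, le_rfl⟩)
    refine norm_delayTerm_le (hK u ⟨hu.1.le, hu.2⟩) hc0 fun i => ?_
    by_cases hβτ : β ≤ τ i u
    · rw [indicator_of_mem (mem_Ici.2 hβτ)]
      exact hc _ ⟨hβτ, (hD.delay_mem i u ⟨hu.1.le, hu.2⟩).2⟩
    · rw [indicator_of_notMem (notMem_Ici.2 (not_le.1 hβτ)), norm_zero]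
      exact hc0

end IsPrincipalSolution

theorem IsPrincipalSolution.eq_add_integral_add_integral
    (hX : IsPrincipalSolution p τ α β γ XX) (hD : IsLinearDelaySystem p τ α β γ)
    {q φ x : ℝ → X} (hq : Continuous q) (hφ : Continuous φ) (hxc : ContinuousOn x (Icc α γ))
    (hxφ : ∀ t ∈ Icc α β, x t = φ t)
    (hx : ∀ t ∈ Icc β γ, HasDerivWithinAt x (delayTerm p τ x t + q t) (Icc β γ) t)
    {t : ℝ} (ht : t ∈ Icc β γ) :
    x t = XX t β (φ β) + (∫ s in β..t, XX t s (q s)) +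
      ∫ s in β..t, XX t s (delayTerm p τ ((Ico α β).indicator φ) s) := by
  have hβ : β ∈ Icc β γ := ⟨le_rfl, ht.1.trans ht.2⟩
  have hγ : γ ∈ Icc β γ := ⟨hβ.2, le_rfl⟩
  set h := delayTerm p τ ((Ico α β).indicator φ)
  have hhm : StronglyMeasurable h := Finset.stronglyMeasurable_fun_sum _ fun i _ =>
    (hD.continuous_coeff i).stronglyMeasurable.clm_apply ((hφ.stronglyMeasurable.indicator
      measurableSet_Ico).comp_measurable (hD.continuous_delay i).measurable)
  obtain ⟨Ch, hCh⟩ := hD.exists_norm_delayTerm_indicator_le hφ.continuousOn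
  obtain ⟨Cq, hCq⟩ := isCompact_Icc.exists_bound_of_continuousOn (s := Icc β γ) hq.continuousOn
  have hCv : ∀ s ∈ Icc β γ, ‖(q + h) s‖ ≤ Cq + Ch := fun s hs =>
    (norm_add_le _ _).trans (add_le_add (hCq s hs) (hCh s hs))
  obtain ⟨Cx, hCx⟩ := hD.exists_norm_delayTerm_add_le hq.continuousOn hxc
  have hsplit : ∀ u ∈ Icc β γ,
      delayTerm p τ x u + q u = delayTerm p τ ((Ici β).indicator x) u + (q + h) u :=
    fun u hu => by rw [hD.delayTerm_eq_add hxφ hu, Pi.add_apply]; abel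
  have hxeq : ∀ r ∈ Icc β γ,
      x r = φ β + ∫ u in β..r, (delayTerm p τ ((Ici β).indicator x) u + (q + h) u) := by
    intro r hr
    rw [eq_add_integral_of_hasDerivWithinAt_of_norm_le hx hCx hr, hxφ β ⟨hD.le_initial, le_rfl⟩,
      intervalIntegral.integral_congr fun u hu => hsplit u (uIcc_subset_Icc hβ hr hu)]
  have hxi : IntervalIntegrable (delayTerm p τ ((Ici β).indicator x)) volume β γ := by
    refine ((intervalIntegrable_of_hasDerivWithinAt_of_norm_le hβ.2 hx hCx).sub
      ((hq.stronglyMeasurable.add hhm).intervalIntegrable_of_norm_le hCv hβ hγ)).congr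
      fun u hu => ?_
    rw [uIoc_of_le hβ.2] at hu
    simp only [hsplit u (Ioc_subset_Icc_self hu), add_sub_cancel_right]
  have htα : t ∈ Icc α γ := ⟨hD.le_initial.trans ht.1, ht.2⟩
  rw [hX.eqOn_variationOfParameters hD (hq.stronglyMeasurable.add hhm) hCv hxeq hxi ht,
    variationOfParameters, add_assoc, ← intervalIntegral.integral_add
      (hX.intervalIntegrable_apply hD hq.stronglyMeasurable hCq htα hβ ht)
      (hX.intervalIntegrable_apply hD hhm hCh htα hβ ht)]
  simp only [Pi.add_apply, map_add]

end VariationOfParameters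

theorem linear_delay_variation_of_parameters_general
    {X : Type*} [NormedAddCommGroup X] [NormedSpace ℝ X] [CompleteSpace X]
    {n : ℕ}
    {α β γ : ℝ} (hαβ : α ≤ β) (hβγ : β < γ)
    (τ : Fin n → ℝ → ℝ)
    (hτc : ∀ i, ContinuousOn (τ i) (Icc β γ))
    (hτ : ∀ i, ∀ t ∈ Icc β γ, α ≤ τ i t ∧ τ i t ≤ t)
    (φ : ℝ → X) (hφ : ContinuousOn φ (Icc α β))
    (p : Fin n → ℝ → X →L[ℝ] X) (hp : ∀ i, ContinuousOn (p i) (Icc β γ))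
    (q : ℝ → X) (hq : ContinuousOn q (Icc β γ))
    -- the principal solution `𝒳(t, ζ) = XX t ζ`
    (XX : ℝ → ℝ → X →L[ℝ] X)
    (hXX0 : ∀ ζ ∈ Icc β γ, ∀ t ∈ Ico α ζ, XX t ζ = 0)
    (hXXinit : ∀ ζ ∈ Icc β γ, XX ζ ζ = ContinuousLinearMap.id ℝ X)
    (hXXder : ∀ ζ ∈ Icc β γ, ∀ t ∈ Icc ζ γ,
      HasDerivWithinAt (fun t => XX t ζ)
        (∑ i, (p i t).comp (XX (τ i t) ζ)) (Icc ζ γ) t)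
    -- the solution of the linear delay initial value problem
    (x : ℝ → X) (hxc : ContinuousOn x (Icc α γ))
    (hxφ : ∀ t ∈ Icc α β, x t = φ t)
    (hx : ∀ t ∈ Icc β γ,
      HasDerivWithinAt x (∑ i, p i t (x (τ i t)) + q t) (Icc β γ) t) :
    ∀ t ∈ Icc β γ,
      x t = XX t β (φ β) + (∫ s in β..t, XX t s (q s)) +
        ∫ s in β..t, XX t s
          (∑ i, if α ≤ τ i s ∧ τ i s < β then p i s (φ (τ i s)) else 0) := by
  intro t ht
  choose τ' hτ'c hτ'eq using fun i => (hτc i).exists_continuous_eqOn_Icc hβγ.le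
  choose p' hp'c hp'eq using fun i => (hp i).exists_continuous_eqOn_Icc hβγ.le
  obtain ⟨q', hq'c, hq'eq⟩ := hq.exists_continuous_eqOn_Icc hβγ.le
  obtain ⟨φ', hφ'c, hφ'eq⟩ := hφ.exists_continuous_eqOn_Icc hαβ
  have hD : IsLinearDelaySystem p' τ' α β γ :=
    ⟨hαβ, hp'c, hτ'c, fun i s hs => hτ'eq i hs ▸ hτ i s hs⟩
  have hX : IsPrincipalSolution p' τ' α β γ XX := ⟨hXX0, hXXinit, fun ζ hζ s hs => by
    have hs' : s ∈ Icc β γ := ⟨hζ.1.trans hs.1, hs.2⟩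
    simpa only [delaySum, fun i => hp'eq i hs', fun i => hτ'eq i hs'] using hXXder ζ hζ s hs⟩
  have hx' : ∀ s ∈ Icc β γ, HasDerivWithinAt x (delayTerm p' τ' x s + q' s) (Icc β γ) s := by
    intro s hs
    simpa only [delayTerm, fun i => hp'eq i hs, fun i => hτ'eq i hs, hq'eq hs] using hx s hs
  have hsub : uIcc β t ⊆ Icc β γ := uIcc_subset_Icc ⟨le_rfl, hβγ.le⟩ ht
  rw [hX.eq_add_integral_add_integral hD hq'c hφ'c hxc
      (fun s hs => (hxφ s hs).trans (hφ'eq hs).symm) hx' ht, hφ'eq ⟨hαβ, le_rfl⟩,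
    intervalIntegral.integral_congr fun s hs => by rw [hq'eq (hsub hs)]]
  refine congrArg _ (intervalIntegral.integral_congr fun s hs => congrArg _ ?_)
  simp only [delayTerm, fun i => hp'eq i (hsub hs), fun i => hτ'eq i (hsub hs)]
  refine Finset.sum_congr rfl fun i _ => ?_
  by_cases h : α ≤ τ i s ∧ τ i s < β
  · rw [if_pos h, indicator_of_mem (mem_Ico.2 h), hφ'eq ⟨h.1, h.2.le⟩]
  · rw [if_neg h, indicator_of_notMem (mt mem_Ico.1 h), map_zero]

/-- Variation of parameters (solution representation) formula for linear delay
differential equations in terms of the principal solution `𝒳`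
(continuous-time case). -/
theorem linear_delay_variation_of_parameters
    {X : Type*} [NormedAddCommGroup X] [NormedSpace ℝ X] [CompleteSpace X]
    {n : ℕ} (hn : 0 < n)
    {α β γ : ℝ} (hαβ : α ≤ β) (hβγ : β < γ)
    (τ : Fin n → ℝ → ℝ)
    (hτc : ∀ i, ContinuousOn (τ i) (Icc β γ))
    (hτ : ∀ i, ∀ t ∈ Icc β γ, α ≤ τ i t ∧ τ i t ≤ t)
    (φ : ℝ → X) (hφ : ContinuousOn φ (Icc α β))
    (p : Fin n → ℝ → X →L[ℝ] X) (hp : ∀ i, ContinuousOn (p i) (Icc β γ))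
    (q : ℝ → X) (hq : ContinuousOn q (Icc β γ))
    -- the principal solution `𝒳(t, ζ) = XX t ζ`
    (XX : ℝ → ℝ → X →L[ℝ] X)
    (hXX0 : ∀ ζ ∈ Icc β γ, ∀ t ∈ Ico α ζ, XX t ζ = 0)
    (hXXinit : ∀ ζ ∈ Icc β γ, XX ζ ζ = ContinuousLinearMap.id ℝ X)
    (hXXc : ∀ ζ ∈ Icc β γ, ContinuousOn (fun t => XX t ζ) (Icc ζ γ))
    (hXXder : ∀ ζ ∈ Icc β γ, ∀ t ∈ Icc ζ γ,
      HasDerivWithinAt (fun t => XX t ζ)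
        (∑ i, (p i t).comp (XX (τ i t) ζ)) (Icc ζ γ) t)
    -- the solution of the linear delay initial value problem
    (x : ℝ → X) (hxc : ContinuousOn x (Icc α γ))
    (hxφ : ∀ t ∈ Icc α β, x t = φ t)
    (hx : ∀ t ∈ Icc β γ,
      HasDerivWithinAt x (∑ i, p i t (x (τ i t)) + q t) (Icc β γ) t) :
    ∀ t ∈ Icc β γ,
      x t = XX t β (φ β) + (∫ s in β..t, XX t s (q s)) +
        ∫ s in β..t, XX t s
          (∑ i, if α ≤ τ i s ∧ τ i s < β then p i s (φ (τ i s)) else 0) :=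
  linear_delay_variation_of_parameters_general hαβ hβγ τ hτc hτ φ hφ p hp q hq XX hXX0 hXXinit
    hXXder x hxc hxφ hx
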